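/- Let q > 0, σ > 0, μ₀, μ ∈ ℝ, and p ≠ 0 with p < q·σ, and let Z ~ Exp(μ₀, 1/q). Then the function ψ ↦ E[exp(p(Z + ψ − μ)/σ) − p(Z + ψ − μ)/σ − 1] is finite for every ψ ∈ ℝ and attains a strict global minimum on ℝ at ψ* = μ − μ₀ + (σ/p)·ln((σ·q − p)/(σ·q)). -/

import Mathlib

open MeasureTheory ProbabilityTheory Real
open scoped ENNReal

/-- Two-parameter exponential distribution `Exp(μ, θ)` with location `μ` and scale `θ`. -/
noncomputable def expLocMeasure (μ θ : ℝ) : Measure ℝ :=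
  volume.withDensity fun x =>
    ENNReal.ofReal (if μ < x then θ⁻¹ * Real.exp (-(x - μ) / θ) else 0)

/-- Gamma distribution `Gamma(a, θ)` with shape `a` and scale `θ`. -/
noncomputable def gammaScaleMeasure (a θ : ℝ) : Measure ℝ :=
  volume.withDensity fun x =>
    ENNReal.ofReal (if 0 < x then x ^ (a - 1) * Real.exp (-x / θ) / (Real.Gamma a * θ ^ a) else 0)

/-- The Linex loss `e^{pt} - pt - 1`. -/
noncomputable def linexLoss (p t : ℝ) : ℝ := Real.exp (p * t) - p * t - 1

/-- The Linex risk of an estimator `δ` of a location parameter `μ` at scale `σ`,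
with values in `[0, ∞]`. -/
noncomputable def linexRisk {Ω : Type*} [MeasurableSpace Ω] (P : Measure Ω)
    (p μ σ : ℝ) (δ : Ω → ℝ) : ℝ≥0∞ :=
  ∫⁻ ω, ENNReal.ofReal (linexLoss p ((δ ω - μ) / σ)) ∂P

/-! Write `Z = μ₀ + Y` with `Y` exponential of rate `q`, and put `a = p / σ`. Since `a < q`, the
moment `E[exp (a Y)] = q / (q - a)` is finite, and the risk of `Z + ψ` has the closed form
`κ e^d - d - a / q - 1` with `κ = q / (q - a)` and `d = a (μ₀ + ψ - μ)`. As a function of `d`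
this is strictly minimized where `κ e^d = 1`, by `e^x > 1 + x` for `x ≠ 0`; since `a ≠ 0`,
`ψ ↦ d` is a bijection and that point is `ψ*`. -/

open Set

lemma linexLoss_nonneg (p t : ℝ) : 0 ≤ linexLoss p t := by
  have := add_one_le_exp (p * t)
  unfold linexLoss
  linarith

lemma continuous_linexLoss (p : ℝ) : Continuous (linexLoss p) := by
  unfold linexLoss
  fun_prop

lemma linexLoss_div (p t σ : ℝ) : linexLoss p (t / σ) = linexLoss (p / σ) t := by
  simp only [linexLoss, mul_div_assoc', div_mul_eq_mul_div]

lemma integrableOn_exp_neg_mul_Ioi_zero {b : ℝ} (hb : 0 < b) :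
    IntegrableOn (fun y => exp (-(b * y))) (Ioi 0) := by
  simpa only [neg_mul] using exp_neg_integrableOn_Ioi 0 hb

lemma integrableOn_mul_exp_neg_mul_Ioi_zero {b : ℝ} (hb : 0 < b) :
    IntegrableOn (fun y => y * exp (-(b * y))) (Ioi 0) := by
  simpa using integrableOn_rpow_mul_exp_neg_mul_rpow (s := 1) (by norm_num) one_pos hb

lemma integral_exp_neg_mul_Ioi_zero {b : ℝ} (hb : 0 < b) :
    ∫ y in Ioi 0, exp (-(b * y)) = b⁻¹ := by
  simpa using integral_rpow_mul_exp_neg_mul_Ioi one_pos hb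

lemma integral_mul_exp_neg_mul_Ioi_zero {b : ℝ} (hb : 0 < b) :
    ∫ y in Ioi 0, y * exp (-(b * y)) = (b ^ 2)⁻¹ := by
  have h := integral_rpow_mul_exp_neg_mul_Ioi two_pos hb
  norm_num at h
  rw [h, ← inv_pow]

lemma exp_density_mul_linexLoss (q a d y : ℝ) :
    q * exp (-(q * y)) * linexLoss a (y + d) =
      q * exp (a * d) * exp (-((q - a) * y)) - a * q * (y * exp (-(q * y)))
        - q * (a * d + 1) * exp (-(q * y)) := by
  have h : exp (-(q * y)) * exp (a * (y + d)) = exp (a * d) * exp (-((q - a) * y)) := by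
    rw [← exp_add, ← exp_add]
    ring_nf
  unfold linexLoss
  linear_combination q * h

lemma integrableOn_exp_density_mul_linexLoss {q a : ℝ} (hq : 0 < q) (haq : a < q) (d : ℝ) :
    IntegrableOn (fun y => q * exp (-(q * y)) * linexLoss a (y + d)) (Ioi 0) := by
  simp only [exp_density_mul_linexLoss]
  exact (((integrableOn_exp_neg_mul_Ioi_zero (sub_pos.2 haq)).const_mul _).sub
    ((integrableOn_mul_exp_neg_mul_Ioi_zero hq).const_mul _)).sub
    ((integrableOn_exp_neg_mul_Ioi_zero hq).const_mul _)

lemma integral_exp_density_mul_linexLoss {q a : ℝ} (hq : 0 < q) (haq : a < q) (d : ℝ) :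
    ∫ y in Ioi 0, q * exp (-(q * y)) * linexLoss a (y + d) =
      q / (q - a) * exp (a * d) - a * d - a / q - 1 := by
  have hqa : 0 < q - a := sub_pos.2 haq
  have I₁ := (integrableOn_exp_neg_mul_Ioi_zero hqa).const_mul (q * exp (a * d))
  have I₂ := (integrableOn_mul_exp_neg_mul_Ioi_zero hq).const_mul (a * q)
  have I₃ := (integrableOn_exp_neg_mul_Ioi_zero hq).const_mul (q * (a * d + 1))
  simp only [exp_density_mul_linexLoss]
  rw [integral_sub (f := fun y => _ - _) (I₁.sub I₂) I₃, integral_sub I₁ I₂,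
    integral_const_mul, integral_const_mul, integral_const_mul, integral_exp_neg_mul_Ioi_zero hqa,
    integral_exp_neg_mul_Ioi_zero hq, integral_mul_exp_neg_mul_Ioi_zero hq]
  field_simp
  ring

lemma linexRisk_add_const {Ω : Type*} [MeasurableSpace Ω] (P : Measure Ω) (p μ σ ψ : ℝ)
    {Z : Ω → ℝ} (hZ : Measurable Z) :
    linexRisk P p μ σ (fun ω => Z ω + ψ) =
      ∫⁻ x, ENNReal.ofReal (linexLoss (p / σ) (x + (ψ - μ))) ∂P.map Z := by
  have hf : Measurable fun x => ENNReal.ofReal (linexLoss (p / σ) (x + (ψ - μ))) :=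
    ((continuous_linexLoss _).comp (continuous_add_const _)).measurable.ennreal_ofReal
  rw [lintegral_map hf hZ]
  simp only [linexRisk, linexLoss_div, add_sub_assoc]

lemma lintegral_expLocMeasure (μ₀ θ : ℝ) {f : ℝ → ℝ≥0∞} (hf : Measurable f) :
    ∫⁻ x, f x ∂expLocMeasure μ₀ θ =
      ∫⁻ y in Ioi 0, ENNReal.ofReal (θ⁻¹ * exp (-y / θ)) * f (y + μ₀) := by
  have hg : Measurable fun x => ENNReal.ofReal (θ⁻¹ * exp (-(x - μ₀) / θ)) * f x := by
    fun_prop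
  have hshift := setLIntegral_map (measurableSet_Ioi (a := μ₀)) hg (measurable_add_const μ₀)
    (μ := volume)
  rw [map_add_right_eq_self, show (· + μ₀) ⁻¹' Ioi μ₀ = Ioi 0 by ext; simp] at hshift
  simp only [add_sub_cancel_right] at hshift
  rw [expLocMeasure, lintegral_withDensity_eq_lintegral_mul _
    (Measurable.ite measurableSet_Ioi (by fun_prop) measurable_const).ennreal_ofReal hf,
    ← hshift, ← lintegral_indicator measurableSet_Ioi]
  congr 1 with x
  by_cases hx : μ₀ < x <;> simp [hx]

lemma lintegral_linexLoss_expLocMeasure {q a : ℝ} (hq : 0 < q) (haq : a < q) (μ₀ c : ℝ) :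
    ∫⁻ x, ENNReal.ofReal (linexLoss a (x + c)) ∂expLocMeasure μ₀ (1 / q) =
      ENNReal.ofReal (q / (q - a) * exp (a * (μ₀ + c)) - a * (μ₀ + c) - a / q - 1) := by
  have hf : Measurable fun x => ENNReal.ofReal (linexLoss a (x + c)) :=
    ((continuous_linexLoss _).comp (continuous_add_const _)).measurable.ennreal_ofReal
  rw [lintegral_expLocMeasure _ _ hf, ← integral_exp_density_mul_linexLoss hq haq,
    ofReal_integral_eq_lintegral_ofReal (integrableOn_exp_density_mul_linexLoss hq haq _)
      (ae_of_all _ fun y => by have := linexLoss_nonneg a (y + (μ₀ + c)); positivity)]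
  refine setLIntegral_congr_fun measurableSet_Ioi fun y _ => ?_
  rw [← ENNReal.ofReal_mul (by positivity), add_assoc]
  congr 2
  rw [one_div, inv_inv, div_inv_eq_mul, neg_mul, mul_comm y]

lemma mul_exp_sub_lt_mul_exp_sub {κ d₀ d : ℝ} (h₀ : κ * exp d₀ = 1) (hd : d ≠ d₀) :
    κ * exp d₀ - d₀ < κ * exp d - d := by
  have h : κ * exp d = exp (d - d₀) := by
    rw [exp_sub, eq_div_iff (exp_pos _).ne', mul_right_comm, h₀, one_mul]
  linarith [add_one_lt_exp (sub_ne_zero.2 hd)]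

theorem stmt_18_general {Ω : Type*} [MeasurableSpace Ω] (P : Measure Ω)
    (q σ : ℝ) (hq : 0 < q) (hσ : 0 < σ) (μ₀ μ : ℝ)
    (p : ℝ) (hp : p ≠ 0) (hpq : p < q * σ)
    (Z : Ω → ℝ) (hZ : Measurable Z)
    (hZlaw : Measure.map Z P = expLocMeasure μ₀ (1 / q)) :
    (∀ ψ : ℝ, linexRisk P p μ σ (fun ω => Z ω + ψ) ≠ ⊤) ∧
    (∀ ψ : ℝ, ψ ≠ μ - μ₀ + (σ / p) * Real.log ((σ * q - p) / (σ * q)) →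
      linexRisk P p μ σ
          (fun ω => Z ω + (μ - μ₀ + (σ / p) * Real.log ((σ * q - p) / (σ * q)))) <
        linexRisk P p μ σ (fun ω => Z ω + ψ)) := by
  set a := p / σ
  have haq : a < q := (div_lt_iff₀ hσ).2 hpq
  have hqa : 0 < q - a := sub_pos.2 haq
  have hrisk (ψ : ℝ) : linexRisk P p μ σ (fun ω => Z ω + ψ) =
      ENNReal.ofReal (q / (q - a) * exp (a * (μ₀ + (ψ - μ))) - a * (μ₀ + (ψ - μ)) - a / q - 1) := by
    rw [linexRisk_add_const P p μ σ ψ hZ, hZlaw, lintegral_linexLoss_expLocMeasure hq haq]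
  set ψ₀ := μ - μ₀ + (σ / p) * Real.log ((σ * q - p) / (σ * q))
  have hd₀ : a * (μ₀ + (ψ₀ - μ)) = Real.log ((q - a) / q) := by
    have : (σ * q - p) / (σ * q) = (q - a) / q := by
      simp only [a]
      field_simp
    simp only [ψ₀, a, this]
    field_simp
    ring
  have hexp₀ : q / (q - a) * exp (a * (μ₀ + (ψ₀ - μ))) = 1 := by
    rw [hd₀, exp_log (by positivity)]
    field_simp
  refine ⟨fun ψ => hrisk ψ ▸ ENNReal.ofReal_ne_top, fun ψ hψ => ?_⟩
  have hd : a * (μ₀ + (ψ - μ)) ≠ a * (μ₀ + (ψ₀ - μ)) := by simpa [a, hp, hσ.ne'] using hψ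
  have hmin := mul_exp_sub_lt_mul_exp_sub hexp₀ hd
  have hlog := log_le_sub_one_of_pos (div_pos hqa hq)
  rw [hrisk, hrisk, ENNReal.ofReal_lt_ofReal_iff_of_nonneg]
  · linarith
  · rw [hexp₀, hd₀]
    have : (q - a) / q - 1 = -(a / q) := by field_simp; ring
    linarith

/-- For `Z ~ Exp(μ₀, 1/q)` with `p < q·σ`, the Linex risk at `(μ, σ)` of
`Z + ψ` is finite for all `ψ` and uniquely minimized at
`ψ* = μ − μ₀ + (σ/p)·ln((σq − p)/(σq))`. -/
theorem stmt_18 {Ω : Type*} [MeasurableSpace Ω] (P : Measure Ω) [IsProbabilityMeasure P]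
    (q σ : ℝ) (hq : 0 < q) (hσ : 0 < σ) (μ₀ μ : ℝ)
    (p : ℝ) (hp : p ≠ 0) (hpq : p < q * σ)
    (Z : Ω → ℝ) (hZ : Measurable Z)
    (hZlaw : Measure.map Z P = expLocMeasure μ₀ (1 / q)) :
    (∀ ψ : ℝ, linexRisk P p μ σ (fun ω => Z ω + ψ) ≠ ⊤) ∧
    (∀ ψ : ℝ, ψ ≠ μ - μ₀ + (σ / p) * Real.log ((σ * q - p) / (σ * q)) →
      linexRisk P p μ σ
          (fun ω => Z ω + (μ - μ₀ + (σ / p) * Real.log ((σ * q - p) / (σ * q)))) <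
        linexRisk P p μ σ (fun ω => Z ω + ψ)) :=
  stmt_18_general P q σ hq hσ μ₀ μ p hp hpq Z hZ hZlaw
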